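/- arXiv:math/0512394 — 2 statements merged into one kernel-verified Lean document; each statement's English description precedes it below -/
import Mathlib

section
/- Let χ : (0,1) → (0,∞) with 1/χ convex, let m ∈ (0,1), and let ρ : T → (0,1) be a C¹ function on the one-dimensional torus with ∫₀¹ ρ(u) du = m. Then for any j ∈ ℝ, (1/2)∫₀¹ (j + (1/2)ρ'(u))²/χ(ρ(u)) du ≥ (1/2) j²/χ(m), with equality when ρ ≡ m. -/
open Set intervalIntegral MeasureTheory

/-!
Expanding the square, the integrand is `(j² + ρ'²/4)/χ(ρ) + j ρ'/χ(ρ)`. The cross term integrates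
to zero since `ρ'/χ(ρ)` is the derivative of `G ∘ ρ` for a primitive `G` of `1/χ`, and `ρ` is
periodic. Dropping the nonnegative `ρ'²/4χ(ρ)` leaves `j² ∫ 1/χ(ρ)`, which Jensen's inequality for
the convex function `1/χ` bounds below by `j²/χ(∫ ρ) = j²/χ(m)`.
-/

theorem ConvexOn.map_interval_average_le {s : Set ℝ} {g f : ℝ → ℝ} {a b : ℝ}
    (hg : ConvexOn ℝ s g) (hgc : ContinuousOn g s) (hab : a < b)
    (hf : ContinuousOn f (Icc a b)) (hfs : MapsTo f (Icc a b) s) :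
    g (⨍ x in a..b, f x) ≤ ⨍ x in a..b, g (f x) := by
  -- Jensen needs a closed convex set: the image of `[a, b]` is a compact interval inside `s`.
  have hKc : IsClosed (f '' Icc a b) := (isCompact_Icc.image_of_continuousOn hf).isClosed
  have hKconv : Convex ℝ (f '' Icc a b) := by
    rw [hf.image_Icc hab.le]
    exact convex_Icc _ _
  have hKs : f '' Icc a b ⊆ s := image_subset_iff.2 hfs
  rw [uIoc_of_le hab.le]
  refine (hg.subset hKs hKconv).map_set_average_le (hgc.mono hKs) hKc
    (by simp [hab]) (by simp) ?_ (hf.integrableOn_Icc.mono_set Ioc_subset_Icc_self)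
    ((hgc.comp hf hfs).integrableOn_Icc.mono_set Ioc_subset_Icc_self)
  exact ae_restrict_of_forall_mem measurableSet_Ioc fun x hx =>
    mem_image_of_mem f (Ioc_subset_Icc_self hx)

theorem integral_deriv_mul_comp_eq_zero_of_eq {f f' g : ℝ → ℝ} {a b : ℝ}
    (hf : ∀ x ∈ uIcc a b, HasDerivAt f (f' x) x) (hf' : ContinuousOn f' (uIcc a b))
    (hg : ContinuousOn g (f '' uIcc a b)) (hfab : f a = f b) :
    ∫ x in a..b, f' x * g (f x) = 0 := by
  simpa [hfab] using integral_deriv_smul_comp' hf hf' hg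

theorem intervalIntegral.sq_mul_integral_le_integral_add_sq_mul {v w : ℝ → ℝ} {a b : ℝ}
    (hab : a ≤ b) (hw : IntervalIntegrable w volume a b)
    (hvw : IntervalIntegrable (fun x => v x * w x) volume a b)
    (hv2w : IntervalIntegrable (fun x => v x ^ 2 * w x) volume a b)
    (hw0 : ∀ x ∈ Icc a b, 0 ≤ w x) (horth : ∫ x in a..b, v x * w x = 0) (c : ℝ) :
    c ^ 2 * ∫ x in a..b, w x ≤ ∫ x in a..b, (c + v x) ^ 2 * w x := by
  have hexpand : ∀ x, (c + v x) ^ 2 * w x = c ^ 2 * w x + 2 * c * (v x * w x) + v x ^ 2 * w x :=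
    fun x => by ring
  have hv2w0 : 0 ≤ ∫ x in a..b, v x ^ 2 * w x :=
    integral_nonneg hab fun x hx => mul_nonneg (sq_nonneg _) (hw0 x hx)
  simp_rw [hexpand]
  rw [integral_add ((hw.const_mul _).add (hvw.const_mul _)) hv2w,
    integral_add (hw.const_mul _) (hvw.const_mul _), integral_const_mul, integral_const_mul,
    horth]
  linarith

theorem jensen_current_lower_bound_general
    (χ : ℝ → ℝ) (m : ℝ)
    (hχpos : ∀ r ∈ Ioo (0:ℝ) 1, 0 < χ r)
    (hconv : ConvexOn ℝ (Ioo (0:ℝ) 1) (fun r => 1 / χ r))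
    (ρ : ℝ → ℝ) (hρ : ContDiff ℝ 1 ρ)
    (hper : ∀ u, ρ (u + 1) = ρ u)
    (hρ01 : ∀ u, ρ u ∈ Ioo (0:ℝ) 1)
    (hmass : (∫ u in (0:ℝ)..1, ρ u) = m)
    (j : ℝ) :
    (1/2) * (∫ u in (0:ℝ)..1, (j + deriv ρ u / 2)^2 / χ (ρ u)) ≥ (1/2) * j^2 / χ m ∧
    ((∀ u, ρ u = m) →
      (1/2) * (∫ u in (0:ℝ)..1, (j + deriv ρ u / 2)^2 / χ (ρ u)) = (1/2) * j^2 / χ m) := by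
  set g : ℝ → ℝ := fun r => 1 / χ r
  have hgc : ContinuousOn g (Ioo 0 1) := hconv.continuousOn isOpen_Ioo
  have hgρ : Continuous fun u => g (ρ u) := hgc.comp_continuous hρ.continuous hρ01
  have hρ' : Continuous (deriv ρ) := hρ.continuous_deriv le_rfl
  have hjensen : g m ≤ ∫ u in (0:ℝ)..1, g (ρ u) := by
    have h := hconv.map_interval_average_le hgc one_pos hρ.continuous.continuousOn
      fun u _ => hρ01 u
    simpa only [interval_average_eq, sub_zero, inv_one, one_smul, hmass] using h
  have horth : ∫ u in (0:ℝ)..1, deriv ρ u / 2 * g (ρ u) = 0 := by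
    have hcross := integral_deriv_mul_comp_eq_zero_of_eq
      (fun x _ => (hρ.differentiable one_ne_zero x).hasDerivAt) hρ'.continuousOn
      (hgc.mono (image_subset_iff.2 fun u _ => hρ01 u)) (by simpa using (hper 0).symm)
    simp_rw [div_mul_eq_mul_div, intervalIntegral.integral_div, hcross, zero_div]
  have hbound := sq_mul_integral_le_integral_add_sq_mul zero_le_one (hgρ.intervalIntegrable 0 1)
    (((hρ'.div_const 2).mul hgρ).intervalIntegrable 0 1)
    ((((hρ'.div_const 2).pow 2).mul hgρ).intervalIntegrable 0 1)
    (fun u _ => (one_div_pos.2 (hχpos _ (hρ01 u))).le) horth j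
  simp only [g, mul_one_div] at hbound hjensen
  refine ⟨?_, fun hconst => ?_⟩
  · calc (1/2) * j^2 / χ m = (1/2) * (j ^ 2 * (1 / χ m)) := by ring
      _ ≤ (1/2) * ∫ u in (0:ℝ)..1, (j + deriv ρ u / 2) ^ 2 / χ (ρ u) := by
        gcongr
        exact (mul_le_mul_of_nonneg_left hjensen (sq_nonneg j)).trans hbound
  · have hρm : ρ = fun _ => m := funext hconst
    simp only [hρm, deriv_const', zero_div, add_zero, intervalIntegral.integral_const, sub_zero,
      smul_eq_mul, one_mul]
    ring

/-- If `1/χ` is convex on `(0,1)` with `χ > 0` there, then for any `C¹` periodic profile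
`ρ` with values in `(0,1)` and mean `m`, and any current value `j`,
`(1/2)∫₀¹ (j + ρ'/2)²/χ(ρ) ≥ (1/2) j²/χ(m)`, with equality for the constant profile. -/
theorem jensen_current_lower_bound
    (χ : ℝ → ℝ) (m : ℝ) (hm : m ∈ Ioo (0:ℝ) 1)
    (hχpos : ∀ r ∈ Ioo (0:ℝ) 1, 0 < χ r)
    (hconv : ConvexOn ℝ (Ioo (0:ℝ) 1) (fun r => 1 / χ r))
    (ρ : ℝ → ℝ) (hρ : ContDiff ℝ 1 ρ)
    (hper : ∀ u, ρ (u + 1) = ρ u)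
    (hρ01 : ∀ u, ρ u ∈ Ioo (0:ℝ) 1)
    (hmass : (∫ u in (0:ℝ)..1, ρ u) = m)
    (j : ℝ) :
    (1/2) * (∫ u in (0:ℝ)..1, (j + deriv ρ u / 2)^2 / χ (ρ u)) ≥ (1/2) * j^2 / χ m ∧
    ((∀ u, ρ u = m) →
      (1/2) * (∫ u in (0:ℝ)..1, (j + deriv ρ u / 2)^2 / χ (ρ u)) = (1/2) * j^2 / χ m) :=
  jensen_current_lower_bound_general χ m hχpos hconv ρ hρ hper hρ01 hmass j
end

section
/- Let K(ρ) denote, for a C¹ periodic profile ρ : T → (0,1) with mean m and for λ, J ∈ ℝ, the quantity (1/2)∫₀¹ [J²(1 + λ(ρ(u)−m))² + (1/4)ρ'(u)²]/(ρ(u)(1−ρ(u))) du. If χ(r) = r(1−r) then for every non-constant such ρ and λ = χ'(m)/χ(m), K(ρ) as a function of J² has leading coefficient (1/2)∫₀¹ (1+λ(ρ−m))²/χ(ρ) du which satisfies (1/2)∫₀¹ (1+λ(ρ−m))²/χ(ρ) du ≥ 1/(2χ(m)), since χ''(m) = −2 < 0. -/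
/-!
A mobility `χ` that is concave lies below its tangent at the mean `m`:
`χ r ≤ χ m (1 + λ (r - m))` with `λ = χ'(m)/χ(m)`. Writing `t = 1 + λ (r - m)`, this gives
`t² / χ r ≥ t² / (χ m t) = t / χ m`, and `t / χ m` integrates to `1 / χ m` against any profile of
mean `m`. So the constant profile minimizes the leading coefficient.
-/

open Set

theorem ConcaveOn.le_add_mul_sub_of_hasDerivAt {S : Set ℝ} {f : ℝ → ℝ} {f' x y : ℝ}
    (hf : ConcaveOn ℝ S f) (hx : x ∈ S) (hy : y ∈ S) (hf' : HasDerivAt f f' x) :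
    f y ≤ f x + f' * (y - x) := by
  rcases lt_trichotomy x y with hxy | rfl | hyx
  · have hslope := hf.slope_le_of_hasDerivAt hx hy hxy hf'
    rw [slope_def_field, div_le_iff₀ (sub_pos.2 hxy)] at hslope
    linarith
  · simp
  · have hslope := hf.le_slope_of_hasDerivAt hy hx hyx hf'
    rw [slope_def_field, le_div_iff₀ (sub_pos.2 hyx)] at hslope
    linarith

theorem div_le_sq_div_of_le_mul {a t x : ℝ} (ha : 0 < a) (hx : 0 < x) (hxt : x ≤ a * t) :
    t / a ≤ t ^ 2 / x := by
  have ht : 0 < t := pos_of_mul_pos_right (hx.trans_le hxt) ha.le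
  calc t / a = t ^ 2 / (a * t) := by field_simp
    _ ≤ t ^ 2 / x := div_le_div_of_nonneg_left (by positivity) hx hxt

theorem ConcaveOn.one_div_le_intervalIntegral_sq_div {S : Set ℝ} {χ ρ : ℝ → ℝ} {m : ℝ}
    (hχ : ConcaveOn ℝ S χ) (hχc : ContinuousOn χ S) (hχd : DifferentiableAt ℝ χ m)
    (hχpos : ∀ r ∈ S, 0 < χ r) (hm : m ∈ S) (hρ : Continuous ρ) (hρS : ∀ u, ρ u ∈ S)
    (hmass : ∫ u in (0:ℝ)..1, ρ u = m) :
    1 / χ m ≤ ∫ u in (0:ℝ)..1, (1 + deriv χ m / χ m * (ρ u - m)) ^ 2 / χ (ρ u) := by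
  set lam := deriv χ m / χ m
  have hχm := hχpos m hm
  have hχρ : Continuous fun u => χ (ρ u) := hχc.comp_continuous hρ hρS
  have htangent (u : ℝ) : χ (ρ u) ≤ χ m * (1 + lam * (ρ u - m)) := by
    have := hχ.le_add_mul_sub_of_hasDerivAt hm (hρS u) hχd.hasDerivAt
    rwa [mul_add, mul_one, ← mul_assoc, mul_div_cancel₀ _ hχm.ne']
  have hlinear : ∫ u in (0:ℝ)..1, (1 + lam * (ρ u - m)) / χ m = 1 / χ m := by
    have hρi : IntervalIntegrable ρ MeasureTheory.volume 0 1 := hρ.intervalIntegrable 0 1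
    rw [intervalIntegral.integral_div, intervalIntegral.integral_add intervalIntegrable_const
      ((hρi.sub intervalIntegrable_const).const_mul lam), intervalIntegral.integral_const_mul,
      intervalIntegral.integral_sub hρi intervalIntegrable_const, hmass]
    simp
  rw [← hlinear]
  refine intervalIntegral.integral_mono_on zero_le_one
    (Continuous.intervalIntegrable (by fun_prop) 0 1)
    ((Continuous.div (by fun_prop) hχρ fun u => (hχpos _ (hρS u)).ne').intervalIntegrable 0 1)
    fun u _ => div_le_sq_div_of_le_mul hχm (hχpos _ (hρS u)) (htangent u)

theorem concaveOn_mul_one_sub : ConcaveOn ℝ univ fun r : ℝ => r * (1 - r) := by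
  have hsplit : (fun r : ℝ => r * (1 - r)) = id - fun r => r ^ 2 := by
    ext r
    simp only [Pi.sub_apply, id]
    ring
  rw [hsplit]
  exact (concaveOn_id convex_univ).sub even_two.convexOn_pow

theorem ssep_no_dynamical_phase_transition_general
    (m : ℝ) (hm : m ∈ Ioo (0:ℝ) 1)
    (ρ : ℝ → ℝ) (hρ : ContDiff ℝ 1 ρ)
    (hρ01 : ∀ u, ρ u ∈ Ioo (0:ℝ) 1)
    (hmass : (∫ u in (0:ℝ)..1, ρ u) = m)
    (lam : ℝ) (hlam : lam = deriv (fun r : ℝ => r * (1 - r)) m / (m * (1 - m))) :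
    (1/2) * (∫ u in (0:ℝ)..1, (1 + lam * (ρ u - m))^2 / (ρ u * (1 - ρ u))) ≥
      1 / (2 * (m * (1 - m))) := by
  have hbound := (concaveOn_mul_one_sub.subset (subset_univ _) (convex_Ioo 0 1))
    |>.one_div_le_intervalIntegral_sq_div (by fun_prop) (by fun_prop)
      (fun r hr => mul_pos hr.1 (sub_pos.2 hr.2)) hm hρ.continuous hρ01 hmass
  rw [← hlam] at hbound
  calc 1 / (2 * (m * (1 - m))) = 1 / 2 * (1 / (m * (1 - m))) := by rw [one_div_mul_one_div]
    _ ≤ _ := by gcongr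

/-- For the symmetric simple exclusion mobility `χ(r) = r(1−r)` and the traveling-wave
parameter `λ = χ'(m)/χ(m)`, the leading coefficient (in `J²`) of the traveling-wave cost of
any non-constant `C¹` periodic profile with mean `m` is at least `1/(2χ(m))`: no traveling
wave improves on the constant profile. -/
theorem ssep_no_dynamical_phase_transition
    (m : ℝ) (hm : m ∈ Ioo (0:ℝ) 1)
    (ρ : ℝ → ℝ) (hρ : ContDiff ℝ 1 ρ)
    (hper : ∀ u, ρ (u + 1) = ρ u)
    (hρ01 : ∀ u, ρ u ∈ Ioo (0:ℝ) 1)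
    (hmass : (∫ u in (0:ℝ)..1, ρ u) = m)
    (hnc : ∃ u v, ρ u ≠ ρ v)
    (lam : ℝ) (hlam : lam = deriv (fun r : ℝ => r * (1 - r)) m / (m * (1 - m))) :
    (1/2) * (∫ u in (0:ℝ)..1, (1 + lam * (ρ u - m))^2 / (ρ u * (1 - ρ u))) ≥
      1 / (2 * (m * (1 - m))) :=
  ssep_no_dynamical_phase_transition_general m hm ρ hρ hρ01 hmass lam hlam
end
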